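/- arXiv:2005.02899 — 4 statements merged into one kernel-verified Lean document; each statement's English description precedes it below -/
import Mathlib

section
/- (FKG inequality, finite case) Let Ω = {0,1}^n with a product of Bernoulli(p) measures, and let f, g : Ω → ℝ be bounded and nondecreasing with respect to the coordinatewise partial order. Then E[f g] ≥ E[f]·E[g]. -/
/-!
A product measure on a product of chains has a log-modular mass function,
`μ {a ⊓ b} * μ {a ⊔ b} = μ {a} * μ {b}`, because coordinatewise `{aᵢ ⊓ bᵢ, aᵢ ⊔ bᵢ} = {aᵢ, bᵢ}`.
So the FKG inequality for finite distributive lattices (a corollary of the four functions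
theorem) applies. It is stated there for nonnegative functions, which is harmless: shifting
`f` and `g` by constants leaves `E[f g] - E[f] E[g]` unchanged.
-/

open MeasureTheory ENNReal

/-- The Bernoulli(`p`) measure on `{0,1}`. -/
noncomputable def bern (p : ℝ≥0∞) : Measure Bool :=
  p • Measure.dirac true + (1 - p) • Measure.dirac false

lemma map_inf_mul_map_sup {α M : Type*} [LinearOrder α] [CommMagma M] (w : α → M) (a b : α) :
    w (a ⊓ b) * w (a ⊔ b) = w a * w b := by
  rcases le_total a b with h | h
  · rw [inf_of_le_left h, sup_of_le_right h]
  · rw [inf_of_le_right h, sup_of_le_left h, mul_comm]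

lemma prod_map_inf_mul_prod_map_sup {ι M : Type*} {α : ι → Type*} [Fintype ι]
    [∀ i, LinearOrder (α i)] [CommMonoid M] (w : ∀ i, α i → M) (a b : ∀ i, α i) :
    (∏ i, w i ((a ⊓ b) i)) * ∏ i, w i ((a ⊔ b) i) = (∏ i, w i (a i)) * ∏ i, w i (b i) := by
  simp only [← Finset.prod_mul_distrib, Pi.inf_apply, Pi.sup_apply, map_inf_mul_map_sup]

lemma fkg_of_ring {α β : Type*} [DistribLattice α] [Fintype α] [CommRing β] [LinearOrder β]
    [IsStrictOrderedRing β] {μ f g : α → β} (hμ₀ : 0 ≤ μ) (hf : Monotone f) (hg : Monotone g)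
    (hμ : ∀ a b, μ a * μ b ≤ μ (a ⊓ b) * μ (a ⊔ b)) :
    (∑ a, μ a * f a) * ∑ a, μ a * g a ≤ (∑ a, μ a) * ∑ a, μ a * (f a * g a) := by
  obtain ⟨c, hc⟩ := (Set.finite_range f).bddBelow
  obtain ⟨d, hd⟩ := (Set.finite_range g).bddBelow
  have shifted := fkg (fun a ↦ f a - c) (fun a ↦ g a - d) μ hμ₀
    (fun a ↦ sub_nonneg.2 (hc ⟨a, rfl⟩)) (fun a ↦ sub_nonneg.2 (hd ⟨a, rfl⟩))
    (fun a b h ↦ sub_le_sub_right (hf h) c) (fun a b h ↦ sub_le_sub_right (hg h) d) hμ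
  simp only [mul_sub, sub_mul, Finset.sum_sub_distrib, mul_left_comm _ c, ← mul_assoc _ _ d,
    ← Finset.mul_sum, ← Finset.sum_mul] at shifted
  linear_combination shifted

theorem integral_mul_integral_le_integral_mul_pi {ι : Type*} [Fintype ι] {α : ι → Type*}
    [∀ i, LinearOrder (α i)] [∀ i, Fintype (α i)] [∀ i, MeasurableSpace (α i)]
    [∀ i, MeasurableSingletonClass (α i)] (ν : ∀ i, Measure (α i))
    [∀ i, IsProbabilityMeasure (ν i)] {f g : (∀ i, α i) → ℝ} (hf : Monotone f)
    (hg : Monotone g) :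
    (∫ ω, f ω ∂Measure.pi ν) * ∫ ω, g ω ∂Measure.pi ν ≤ ∫ ω, f ω * g ω ∂Measure.pi ν := by
  classical
  simp only [integral_fintype .of_finite, smul_eq_mul]
  have log_modular (a b : ∀ i, α i) :
      (Measure.pi ν).real {a} * (Measure.pi ν).real {b} ≤
        (Measure.pi ν).real {a ⊓ b} * (Measure.pi ν).real {a ⊔ b} := by
    simp only [measureReal_def, Measure.pi_singleton, ENNReal.toReal_prod]
    exact (prod_map_inf_mul_prod_map_sup (fun i x ↦ ((ν i) {x}).toReal) a b).ge
  simpa using fkg_of_ring (fun _ ↦ measureReal_nonneg) hf hg log_modular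

lemma isProbabilityMeasure_bern {p : ℝ≥0∞} (hp : p ≤ 1) : IsProbabilityMeasure (bern p) :=
  ⟨by simp [bern, tsub_add_cancel_of_le hp, add_comm]⟩

theorem fkg_finite_general (n : ℕ) (p : ℝ≥0∞) (hp : p ≤ 1)
    (f g : (Fin n → Bool) → ℝ) (hf : Monotone f) (hg : Monotone g) :
    (∫ ω, f ω ∂(Measure.pi fun _ : Fin n => bern p)) *
      (∫ ω, g ω ∂(Measure.pi fun _ : Fin n => bern p)) ≤
    ∫ ω, f ω * g ω ∂(Measure.pi fun _ : Fin n => bern p) := by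
  have := isProbabilityMeasure_bern hp
  exact integral_mul_integral_le_integral_mul_pi _ hf hg

/-- FKG inequality, finite case: on `{0,1}^n` with the product Bernoulli(`p`)
measure, two bounded nondecreasing functions are positively correlated. -/
theorem fkg_finite (n : ℕ) (p : ℝ≥0∞) (hp : p ≤ 1)
    (f g : (Fin n → Bool) → ℝ) (hf : Monotone f) (hg : Monotone g)
    (hfb : ∃ C, ∀ ω, |f ω| ≤ C) (hgb : ∃ C, ∀ ω, |g ω| ≤ C) :
    (∫ ω, f ω ∂(Measure.pi fun _ : Fin n => bern p)) *
      (∫ ω, g ω ∂(Measure.pi fun _ : Fin n => bern p)) ≤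
    ∫ ω, f ω * g ω ∂(Measure.pi fun _ : Fin n => bern p) :=
  fkg_finite_general n p hp f g hf hg
end

section
/- (FKG for events) For two increasing events A, B in Bernoulli percolation, P_p[A ∩ B] ≥ P_p[A]·P_p[B]; if A is increasing and B is decreasing, then P_p[A ∩ B] ≤ P_p[A]·P_p[B]. -/
open MeasureTheory

/-- Vertices of the lattice `ℤ^d`. -/
abbrev Vertex (d : ℕ) := Fin d → ℤ

/-- Nearest-neighbour edges of `ℤ^d`: the pair `(v, i)` represents the edge
`{v, v + e_i}` where `e_i` is the `i`-th unit vector. -/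
abbrev Edge (d : ℕ) := (Fin d → ℤ) × Fin d

/-- A percolation configuration: each edge is open (`true`) or closed (`false`). -/
abbrev Config (d : ℕ) := Edge d → Bool

/-- `u` and `v` are joined by an open edge in the configuration `ω`. -/
def openAdj {d : ℕ} (ω : Config d) (u v : Vertex d) : Prop :=
  (∃ i, v = u + Pi.single i 1 ∧ ω (u, i) = true) ∨
  (∃ i, u = v + Pi.single i 1 ∧ ω (v, i) = true)

/-- `x ↔ y`: there is a finite path of open edges joining `x` and `y`. -/
def Conn {d : ℕ} (ω : Config d) (x y : Vertex d) : Prop :=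
  Relation.ReflTransGen (openAdj ω) x y
open ENNReal
/-- `P` is the product over the edges of Bernoulli(`p`) measures: the cylinder
event prescribing the states of finitely many edges has the product probability. -/
def IsBernoulli {d : ℕ} (P : Measure (Config d)) (p : ℝ≥0∞) : Prop :=
  ∀ (S : Finset (Edge d)) (f : Edge d → Bool),
    P {ω | ∀ e ∈ S, ω e = f e} = ∏ e ∈ S, (if f e then p else 1 - p)

/-- Translation of configurations: `(τ_x ω)({v,w}) = ω({v-x, w-x})`. -/
def shiftConfig {d : ℕ} (x : Vertex d) (ω : Config d) : Config d :=
  fun e => ω (e.1 - x, e.2)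

/-- An event is increasing if it is preserved under opening more edges. -/
def IncreasingEvent {d : ℕ} (A : Set (Config d)) : Prop :=
  ∀ ⦃ω ω' : Config d⦄, ω ≤ ω' → ω ∈ A → ω' ∈ A

/-- An event is decreasing if its complement is increasing. -/
def DecreasingEvent {d : ℕ} (A : Set (Config d)) : Prop :=
  IncreasingEvent Aᶜ

/-!
On finitely many edges the Bernoulli product weights satisfy the FKG lattice condition with
equality, so the finite FKG inequality gives Harris' inequality for increasing events that depend
on a finite set `S` of edges. A closed increasing event is the decreasing limit, as `S` grows, of the
cylinder events obtained by declaring every edge outside `S` open, and continuity from above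
passes the inequality to it. A measurable increasing event is approximated from inside by upper
closures of compact subsets (inner regularity of `P`); these are closed and increasing. The
decreasing case is the increasing one applied to `Bᶜ`.
-/

open Filter Topology NNReal

lemma IsUpperSet.monotone_indicator_one {α M : Type*} [Preorder α] [Zero M] [One M] [Preorder M]
    [ZeroLEOneClass M] {s : Set α} (hs : IsUpperSet s) :
    Monotone (s.indicator (1 : α → M)) := by
  intro x y hxy
  by_cases hx : x ∈ s
  · simp [hx, hs hxy hx]
  · rw [Set.indicator_of_notMem hx]
    exact Set.indicator_nonneg (f := (1 : α → M)) (fun _ _ => zero_le_one) y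

def bernoulliWeight (q : ℝ≥0) (b : Bool) : ℝ≥0 := if b then q else 1 - q

lemma bernoulliWeight_mul_bernoulliWeight (q : ℝ≥0) (a b : Bool) :
    bernoulliWeight q a * bernoulliWeight q b =
      bernoulliWeight q (a ⊓ b) * bernoulliWeight q (a ⊔ b) := by
  cases a <;> cases b <;> simp [bernoulliWeight, mul_comm]

theorem harris_boolCube {ι : Type*} [Fintype ι] [DecidableEq ι] (q : ℝ≥0)
    {A B : Set (ι → Bool)} (hA : IsUpperSet A) (hB : IsUpperSet B) :
    (∑ x, (∏ i, bernoulliWeight q (x i)) * A.indicator 1 x) *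
        ∑ x, (∏ i, bernoulliWeight q (x i)) * B.indicator 1 x ≤
      (∑ x : ι → Bool, ∏ i, bernoulliWeight q (x i)) *
        ∑ x, (∏ i, bernoulliWeight q (x i)) * (A ∩ B).indicator 1 x := by
  rw [Set.inter_indicator_one]
  refine fkg _ _ _ (fun _ => zero_le) (fun _ => zero_le) (fun _ => zero_le)
    hA.monotone_indicator_one hB.monotone_indicator_one fun x y => le_of_eq ?_
  simp only [← Finset.prod_mul_distrib, Pi.inf_apply, Pi.sup_apply]
  exact Finset.prod_congr rfl fun i _ => bernoulliWeight_mul_bernoulliWeight q (x i) (y i)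

section OpenOutside

variable {ι : Type*} [DecidableEq ι]

def openOutside (S : Finset ι) (x : S → Bool) : ι → Bool :=
  fun e => if h : e ∈ S then x ⟨e, h⟩ else true

lemma monotone_openOutside (S : Finset ι) : Monotone (openOutside S) := by
  intro x y hxy e
  by_cases h : e ∈ S
  · simpa [openOutside, h] using hxy ⟨e, h⟩
  · simp [openOutside, h]

lemma le_openOutside_restrict (S : Finset ι) (ω : ι → Bool) :
    ω ≤ openOutside S (S.restrict ω) := by
  intro e
  by_cases h : e ∈ S <;> simp [openOutside, h]

lemma openOutside_restrict_le_of_subset {S T : Finset ι} (hST : S ⊆ T) (ω : ι → Bool) :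
    openOutside T (T.restrict ω) ≤ openOutside S (S.restrict ω) := by
  intro e
  by_cases hS : e ∈ S
  · simp [openOutside, hS, hST hS]
  · by_cases hT : e ∈ T <;> simp [openOutside, hS, hT]

lemma tendsto_openOutside_restrict (ω : ι → Bool) :
    Tendsto (fun S : Finset ι => openOutside S (S.restrict ω)) atTop (𝓝 ω) := by
  refine tendsto_pi_nhds.2 fun e => tendsto_nhds_of_eventually_eq ?_
  filter_upwards [eventually_ge_atTop {e}] with S hS
  simp [openOutside, Finset.singleton_subset_iff.1 hS]

end OpenOutside

lemma continuous_sup_boolFun {ι : Type*} :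
    Continuous fun ω : (ι → Bool) × (ι → Bool) => ω.1 ⊔ ω.2 := by
  refine continuous_pi fun e => ?_
  change Continuous ((fun b : Bool × Bool => b.1 ⊔ b.2) ∘
    fun ω : (ι → Bool) × (ι → Bool) => (ω.1 e, ω.2 e))
  exact continuous_of_discreteTopology.comp (by fun_prop)

lemma IsCompact.isClosed_upperClosure_boolFun {ι : Type*} {K : Set (ι → Bool)}
    (hK : IsCompact K) : IsClosed (upperClosure K : Set (ι → Bool)) := by
  have : (upperClosure K : Set (ι → Bool)) = (fun ω => ω.1 ⊔ ω.2) '' K ×ˢ Set.univ := by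
    ext ω
    constructor
    · rintro ⟨κ, hκ, hκω⟩
      exact ⟨(κ, ω), ⟨hκ, trivial⟩, sup_eq_right.2 hκω⟩
    · rintro ⟨⟨κ, χ⟩, ⟨hκ, -⟩, rfl⟩
      exact ⟨κ, hκ, le_sup_left⟩
  rw [this]
  exact ((hK.prod isCompact_univ).image continuous_sup_boolFun).isClosed

namespace IsBernoulli

variable {d : ℕ} {P : Measure (Config d)} {q : ℝ≥0}

lemma measure_restrict_preimage_singleton (hP : IsBernoulli P q) (S : Finset (Edge d))
    (x : S → Bool) :
    P (S.restrict ⁻¹' ({x} : Set (S → Bool))) =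
      ∏ i, (bernoulliWeight q (x i) : ℝ≥0∞) := by
  have hcyl : S.restrict ⁻¹' ({x} : Set (S → Bool)) =
      {ω : Config d | ∀ e ∈ S, ω e = openOutside S x e} := by
    ext ω
    refine ⟨fun h e he => ?_, fun h => funext fun e => (h e e.2).trans (dif_pos e.2)⟩
    rw [openOutside, dif_pos he, ← Set.mem_singleton_iff.1 h]
    rfl
  rw [hcyl, hP, ← Finset.prod_coe_sort S]
  refine Finset.prod_congr rfl fun e _ => ?_
  rw [openOutside, dif_pos e.2, bernoulliWeight]
  split_ifs <;> simp

lemma measure_restrict_preimage (hP : IsBernoulli P q) (S : Finset (Edge d))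
    (A : Set (S → Bool)) :
    P (S.restrict ⁻¹' A) = ↑(∑ x, (∏ i, bernoulliWeight q (x i)) * A.indicator 1 x) := by
  classical
  rw [← Set.coe_toFinset A, ← sum_measure_preimage_singleton _
    fun x _ => S.measurable_restrict (measurableSet_singleton x)]
  simp [measure_restrict_preimage_singleton hP, Set.indicator_apply, Finset.sum_ite,
    Set.filter_mem_univ_eq_toFinset]

variable [IsProbabilityMeasure P]

theorem harris_restrict_preimage (hP : IsBernoulli P q) (S : Finset (Edge d))
    {A B : Set (S → Bool)} (hA : IsUpperSet A) (hB : IsUpperSet B) :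
    P (S.restrict ⁻¹' A) * P (S.restrict ⁻¹' B) ≤ P (S.restrict ⁻¹' (A ∩ B)) := by
  have htotal : ∑ x : S → Bool, ∏ i, bernoulliWeight q (x i) = 1 := by
    have h := hP.measure_restrict_preimage S Set.univ
    simp only [Set.preimage_univ, measure_univ, Set.indicator_univ, Pi.one_apply, mul_one] at h
    exact_mod_cast h.symm
  rw [hP.measure_restrict_preimage, hP.measure_restrict_preimage, hP.measure_restrict_preimage,
    ← ENNReal.coe_mul, ENNReal.coe_le_coe]
  simpa only [htotal, one_mul] using harris_boolCube q hA hB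

theorem harris_of_isClosed (hP : IsBernoulli P q) {C D : Set (Config d)}
    (hC : IsClosed C) (hC' : IsUpperSet C) (hD : IsClosed D) (hD' : IsUpperSet D) :
    P C * P D ≤ P (C ∩ D) := by
  -- `approx E S` declares every edge outside `S` open; for closed upper `E` it decreases to `E`.
  set approx : Set (Config d) → Finset (Edge d) → Set (Config d) :=
    fun E S => S.restrict ⁻¹' (openOutside S ⁻¹' E)
  have hsub : ∀ {E}, IsUpperSet E → ∀ S, E ⊆ approx E S :=
    fun hE S ω hω => hE (le_openOutside_restrict S ω) hω
  have hanti : ∀ {E}, IsUpperSet E → Antitone (approx E) :=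
    fun hE S T hST ω hω => hE (openOutside_restrict_le_of_subset hST ω) hω
  have hlim : ∀ {E}, IsClosed E → ⋂ S, approx E S ⊆ E := fun hE ω hω =>
    hE.mem_of_tendsto (tendsto_openOutside_restrict ω)
      (Eventually.of_forall (Set.mem_iInter.1 hω))
  have hmeas : ∀ E S, MeasurableSet (approx E S) :=
    fun E S => S.measurable_restrict (Set.toFinite _).measurableSet
  calc P C * P D ≤ ⨅ S, P (approx C S ∩ approx D S) := le_iInf fun S =>
        (mul_le_mul' (measure_mono (hsub hC' S)) (measure_mono (hsub hD' S))).trans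
          (hP.harris_restrict_preimage S (hC'.preimage (monotone_openOutside S))
            (hD'.preimage (monotone_openOutside S)))
    _ = P (⋂ S, approx C S ∩ approx D S) := (((hanti hC').inter (hanti hD')).measure_iInter
          (fun S => ((hmeas C S).inter (hmeas D S)).nullMeasurableSet)
          ⟨∅, measure_ne_top _ _⟩).symm
    _ ≤ P (C ∩ D) := measure_mono <| Set.iInter_inter_distrib _ _ ▸
        Set.inter_subset_inter (hlim hC) (hlim hD)

theorem harris (hP : IsBernoulli P q) {A B : Set (Config d)}
    (hA : MeasurableSet A) (hA' : IsUpperSet A) (hB : MeasurableSet B) (hB' : IsUpperSet B) :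
    P A * P B ≤ P (A ∩ B) := by
  rw [hA.measure_eq_iSup_isCompact P, hB.measure_eq_iSup_isCompact P]
  simp only [ENNReal.iSup_mul]
  simp only [ENNReal.mul_iSup]
  refine iSup₂_le fun K hKA => iSup_le fun hK => iSup₂_le fun L hLB => iSup_le fun hL => ?_
  calc P K * P L ≤ P (upperClosure K) * P (upperClosure L) := by
        gcongr <;> exact subset_upperClosure
    _ ≤ P (upperClosure K ∩ upperClosure L) :=
        hP.harris_of_isClosed hK.isClosed_upperClosure_boolFun (upperClosure K).upper
          hL.isClosed_upperClosure_boolFun (upperClosure L).upper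
    _ ≤ P (A ∩ B) := measure_mono (Set.inter_subset_inter (upperClosure_min hKA hA')
        (upperClosure_min hLB hB'))

end IsBernoulli

lemma measure_inter_le_mul_of_mul_compl_le {Ω : Type*} [MeasurableSpace Ω] {μ : Measure Ω}
    [IsProbabilityMeasure μ] {A B : Set Ω} (hB : MeasurableSet B)
    (h : μ A * μ Bᶜ ≤ μ (A ∩ Bᶜ)) : μ (A ∩ B) ≤ μ A * μ B := by
  have hsplit : μ (A ∩ B) + μ (A ∩ Bᶜ) = μ A := by
    rw [← Set.sdiff_eq]
    exact measure_inter_add_sdiff A hB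
  have hprod : μ A * μ B + μ A * μ Bᶜ = μ A := by
    rw [← mul_add, prob_add_prob_compl hB, mul_one]
  refine (ENNReal.add_le_add_iff_right (by finiteness : μ A * μ Bᶜ ≠ ∞)).1 ?_
  calc μ (A ∩ B) + μ A * μ Bᶜ ≤ μ (A ∩ B) + μ (A ∩ Bᶜ) := by gcongr
    _ = μ A * μ B + μ A * μ Bᶜ := hsplit.trans hprod.symm

lemma increasingEvent_iff_isUpperSet {d : ℕ} {A : Set (Config d)} :
    IncreasingEvent A ↔ IsUpperSet A :=
  Iff.rfl

/-- FKG inequality for events: increasing events are positively correlated, and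
an increasing and a decreasing event are negatively correlated. -/
theorem fkg_events {d : ℕ} (P : Measure (Config d)) [IsProbabilityMeasure P]
    (p : ℝ≥0∞) (hp : p ≤ 1) (hP : IsBernoulli P p)
    (A B : Set (Config d)) (hA : MeasurableSet A) (hB : MeasurableSet B) :
    (IncreasingEvent A → IncreasingEvent B → P A * P B ≤ P (A ∩ B)) ∧
    (IncreasingEvent A → DecreasingEvent B → P (A ∩ B) ≤ P A * P B) := by
  lift p to ℝ≥0 using ne_top_of_le_ne_top one_ne_top hp
  simp only [DecreasingEvent, increasingEvent_iff_isUpperSet]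
  exact ⟨fun hA' hB' => hP.harris hA hA' hB hB',
    fun hA' hB' => measure_inter_le_mul_of_mul_compl_le hB (hP.harris hA hA' hB.compl hB')⟩
end

section
/- (OSSS inequality) Let Ω = Π_{i∈I} Ω_i be a finite product of probability spaces with product measure P, f : Ω → [0,1] measurable, and T a (randomized) decision-tree algorithm determining f. Then Var(f) ≤ Σ_{i∈I} δ_i(T)·Inf_i(f), where δ_i(T) is the probability T reveals coordinate i and Inf_i(f) = P(f(ω) ≠ f(ω^{(i)})) with ω^{(i)} obtained from ω by independently resampling coordinate i. -/
open MeasureTheory ProbabilityTheory ENNReal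

/-- A decision tree over the product space `Π i, Ω i`: at each internal node it
queries a coordinate and branches on its value; leaves carry the output. -/
inductive DTree (I : Type*) (Ω : I → Type*) (α : Type*) where
  | leaf : α → DTree I Ω α
  | node : (i : I) → ((Ω i) → DTree I Ω α) → DTree I Ω α

/-- The output computed by a decision tree on the input `ω`. -/
def DTree.eval {I : Type*} {Ω : I → Type*} {α : Type*} :
    DTree I Ω α → (∀ i, Ω i) → α
  | .leaf a, _ => a
  | .node i c, ω => (c (ω i)).eval ω

/-- The set of coordinates revealed (queried) by the tree on the input `ω`. -/
def DTree.revealed {I : Type*} {Ω : I → Type*} {α : Type*} :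
    DTree I Ω α → (∀ i, Ω i) → Set I
  | .leaf _, _ => ∅
  | .node i c, ω => insert i ((c (ω i)).revealed ω)

/-!
Generalize to `Cov(F, G) ≤ ∑ⱼ δⱼ(S) Inf_j(G)` for every `[0,1]`-valued `G` and every tree `S`
computing `F`, and induct on `S` after pruning repeated queries. If the root of `S` queries `i`,
split `F = (F - F^{i←x}) + F^{i←x}` with `x` a fresh sample of coordinate `i`. The subtree at `x`
computes `F^{i←x}`, so the induction hypothesis bounds the second part, and averaging over `x`
turns the revealments of the subtrees into those of `S` minus the query at the root. For the first
part, resample the old value `u` of coordinate `i` as well: symmetrizing in `(u, x)` turns the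
integrand into `(F^{i←u} - F^{i←x}) (G^{i←u} - G^{i←x}) / 2`, which is at most `1/2` and vanishes
unless `G` changes, so this part contributes at most `Inf_i(G)`.
Taking `G = F = f` gives the theorem, since `Var f = Cov(f, f)`.
-/

open Function

section Bounded

variable {β : Type*} [MeasurableSpace β] {ν : Measure β}

theorem norm_le_one_of_mem_Icc {a : ℝ} (ha : a ∈ Set.Icc (0 : ℝ) 1) : ‖a‖ ≤ 1 := by
  rw [Real.norm_of_nonneg ha.1]
  exact ha.2

theorem norm_sub_le_one_of_mem_Icc {a b : ℝ} (ha : a ∈ Set.Icc (0 : ℝ) 1)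
    (hb : b ∈ Set.Icc (0 : ℝ) 1) : ‖a - b‖ ≤ 1 := by
  rw [Real.norm_eq_abs, abs_le]
  constructor <;> linarith [ha.1, ha.2, hb.1, hb.2]

theorem sub_mul_sub_le_one_of_mem_Icc {a b c d : ℝ} (ha : a ∈ Set.Icc (0 : ℝ) 1)
    (hb : b ∈ Set.Icc (0 : ℝ) 1) (hc : c ∈ Set.Icc (0 : ℝ) 1) (hd : d ∈ Set.Icc (0 : ℝ) 1) :
    (a - b) * (c - d) ≤ 1 := calc
  (a - b) * (c - d) ≤ ‖a - b‖ * ‖c - d‖ := (Real.le_norm_self _).trans (norm_mul _ _).le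
  _ ≤ 1 * 1 := mul_le_mul (norm_sub_le_one_of_mem_Icc ha hb) (norm_sub_le_one_of_mem_Icc hc hd)
    (norm_nonneg _) zero_le_one
  _ = 1 := one_mul 1

theorem memLp_of_mem_Icc [IsFiniteMeasure ν] {g : β → ℝ} (hg : Measurable g)
    (h01 : ∀ b, g b ∈ Set.Icc (0 : ℝ) 1) (p : ℝ≥0∞) : MemLp g p ν :=
  .of_bound hg.aestronglyMeasurable 1 (ae_of_all _ fun b => norm_le_one_of_mem_Icc (h01 b))

theorem integrable_mul_sub_const [IsFiniteMeasure ν] {A B : β → ℝ} (hA : Measurable A)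
    (hA1 : ∀ b, ‖A b‖ ≤ 1) (hB : Measurable B) (hB01 : ∀ b, B b ∈ Set.Icc (0 : ℝ) 1) (m : ℝ) :
    Integrable (fun b => A b * (B b - m)) ν :=
  (((memLp_of_mem_Icc hB hB01 1).integrable le_rfl).sub (integrable_const m)).bdd_mul
    hA.aestronglyMeasurable (ae_of_all _ hA1)

theorem covariance_eq_integral_mul_sub [IsProbabilityMeasure ν] {X Y : β → ℝ}
    (hX : MemLp X 2 ν) (hY : MemLp Y 2 ν) : cov[X, Y; ν] = ∫ b, X b * (Y b - ν[Y]) ∂ν := by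
  rw [covariance_eq_sub hX hY, ← integral_mul_const,
    ← integral_sub (hX.integrable_mul hY) ((hX.integrable one_le_two).mul_const _)]
  simp_rw [mul_sub]
  rfl

theorem MeasureTheory.MeasurePreserving.integral_comp_of_aestronglyMeasurable {γ : Type*}
    [MeasurableSpace γ] {ρ : Measure γ} {φ : γ → β} (hφ : MeasurePreserving φ ρ ν) {g : β → ℝ}
    (hg : AEStronglyMeasurable g ν) : ∫ z, g (φ z) ∂ρ = ∫ b, g b ∂ν := by
  rw [← hφ.map_eq] at hg ⊢
  exact (integral_map hφ.measurable.aemeasurable hg).symm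

end Bounded

namespace DTree

variable {I : Type*} {Ω : I → Type*} {α : Type*}

def Avoids : DTree I Ω α → I → Prop
  | .leaf _, _ => True
  | .node j c, i => j ≠ i ∧ ∀ x, (c x).Avoids i

def Nodup : DTree I Ω α → Prop
  | .leaf _ => True
  | .node i c => ∀ x, (c x).Avoids i ∧ (c x).Nodup

theorem notMem_revealed_of_avoids {S : DTree I Ω α} {i : I} (hS : S.Avoids i)
    (ω : ∀ j, Ω j) : i ∉ S.revealed ω := by
  induction S with
  | leaf => simp [revealed]
  | node j c ih =>
    simp only [revealed, Set.mem_insert_iff, not_or]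
    exact ⟨hS.1.symm, ih _ (hS.2 _)⟩

variable [DecidableEq I]

theorem eval_update_of_avoids {S : DTree I Ω α} {i : I} (hS : S.Avoids i)
    (ω : ∀ j, Ω j) (x : Ω i) : S.eval (update ω i x) = S.eval ω := by
  induction S with
  | leaf => rfl
  | node j c ih => simp only [eval, update_of_ne hS.1, ih _ (hS.2 _)]

theorem revealed_update_of_avoids {S : DTree I Ω α} {i : I} (hS : S.Avoids i)
    (ω : ∀ j, Ω j) (x : Ω i) : S.revealed (update ω i x) = S.revealed ω := by
  induction S with
  | leaf => rfl
  | node j c ih => simp only [revealed, update_of_ne hS.1, ih _ (hS.2 _)]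

def ExtendsPartial (ω : ∀ j, Ω j) (e : ∀ j, Option (Ω j)) : Prop :=
  ∀ j v, e j = some v → ω j = v

theorem ExtendsPartial.update_some {ω : ∀ j, Ω j} {e : ∀ j, Option (Ω j)}
    (he : ExtendsPartial ω e) (i : I) : ExtendsPartial ω (update e i (some (ω i))) := by
  intro j v hj
  rcases eq_or_ne j i with rfl | hji
  · simpa using hj
  · exact he j v (by simpa [update_of_ne hji] using hj)

def prune : DTree I Ω α → (∀ j, Option (Ω j)) → DTree I Ω α
  | .leaf a, _ => .leaf a
  | .node i c, e =>
    match e i with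
    | some v => (c v).prune e
    | none => .node i fun x => (c x).prune (update e i (some x))

theorem eval_prune (S : DTree I Ω α) {e : ∀ j, Option (Ω j)} {ω : ∀ j, Ω j}
    (he : ExtendsPartial ω e) : (S.prune e).eval ω = S.eval ω := by
  induction S generalizing e with
  | leaf => rfl
  | node i c ih =>
    cases hei : e i with
    | some v => simpa only [prune, hei, eval, he i v hei] using ih v he
    | none =>
      simp only [prune, hei, eval]
      exact ih (ω i) (he.update_some i)

theorem revealed_prune_subset (S : DTree I Ω α) {e : ∀ j, Option (Ω j)} {ω : ∀ j, Ω j}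
    (he : ExtendsPartial ω e) : (S.prune e).revealed ω ⊆ S.revealed ω := by
  induction S generalizing e with
  | leaf => exact subset_rfl
  | node i c ih =>
    cases hei : e i with
    | some v =>
      simp only [prune, hei, revealed, ← he i v hei]
      exact (ih _ he).trans (Set.subset_insert _ _)
    | none =>
      simp only [prune, hei, revealed]
      exact Set.insert_subset_insert (ih (ω i) (he.update_some i))

theorem avoids_prune (S : DTree I Ω α) {e : ∀ j, Option (Ω j)} {j : I} (hj : (e j).isSome) :
    (S.prune e).Avoids j := by
  induction S generalizing e with
  | leaf => trivial
  | node i c ih =>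
    cases hei : e i with
    | some v => simpa only [prune, hei] using ih v hj
    | none =>
      simp only [prune, hei]
      refine ⟨by rintro rfl; simp [hei] at hj, fun x => ih x ?_⟩
      rcases eq_or_ne j i with rfl | hji
      · simp
      · simpa [update_of_ne hji] using hj

theorem nodup_prune (S : DTree I Ω α) (e : ∀ j, Option (Ω j)) : (S.prune e).Nodup := by
  induction S generalizing e with
  | leaf => trivial
  | node i c ih =>
    cases hei : e i with
    | some v => simpa only [prune, hei] using ih v e
    | none =>
      simp only [prune, hei]
      exact fun x => ⟨avoids_prune _ (by simp), ih x _⟩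

end DTree

section Resampling

variable {I : Type*} [Fintype I] [DecidableEq I] {Ω : I → Type*} [∀ i, MeasurableSpace (Ω i)]
  (μ : ∀ i, Measure (Ω i)) [∀ i, IsProbabilityMeasure (μ i)]

theorem measurePreserving_update_pi (i : I) :
    MeasurePreserving (fun q : (∀ j, Ω j) × Ω i => update q.1 i q.2)
      ((Measure.pi μ).prod (μ i)) (Measure.pi μ) := by
  refine ⟨measurable_update', (Measure.pi_eq fun s hs => ?_).symm⟩
  have hpre : (fun q : (∀ j, Ω j) × Ω i => update q.1 i q.2) ⁻¹' Set.univ.pi s =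
      Set.univ.pi (update s i Set.univ) ×ˢ s i := by
    ext ⟨ω, x⟩
    simp only [Set.mem_preimage, Set.mem_prod, Set.mem_univ_pi,
      forall_update_iff _ fun j t => ω j ∈ t, forall_update_iff ω fun j y => y ∈ s j]
    simp [and_comm]
  rw [Measure.map_apply measurable_update' (.univ_pi hs), hpre, Measure.prod_prod, Measure.pi_pi,
    ← Finset.prod_erase_mul _ _ (Finset.mem_univ i),
    ← Finset.prod_erase_mul _ _ (Finset.mem_univ i)]
  simp only [update_self, measure_univ, mul_one]
  congr 1
  exact Finset.prod_congr rfl fun j hj => by rw [update_of_ne (Finset.ne_of_mem_erase hj)]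

theorem measurable_measure_update_preimage (i : I) {C : Set (∀ j, Ω j)}
    (hC : MeasurableSet C) : Measurable fun x : Ω i => Measure.pi μ ((update · i x) ⁻¹' C) :=
  measurable_measure_prodMk_right (measurable_update' hC)

theorem lintegral_measure_update_preimage (i : I) {C : Set (∀ j, Ω j)} (hC : MeasurableSet C) :
    ∫⁻ x, Measure.pi μ ((update · i x) ⁻¹' C) ∂μ i = Measure.pi μ C := by
  rw [← (measurePreserving_update_pi μ i).measure_preimage hC.nullMeasurableSet,
    Measure.prod_apply_symm (measurable_update' hC)]
  rfl

theorem integrable_measureReal_update_preimage (i : I) {C : Set (∀ j, Ω j)}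
    (hC : MeasurableSet C) :
    Integrable (fun x : Ω i => (Measure.pi μ).real ((update · i x) ⁻¹' C)) (μ i) :=
  integrable_toReal_of_lintegral_ne_top (measurable_measure_update_preimage μ i hC).aemeasurable
    (by rw [lintegral_measure_update_preimage μ i hC]; exact measure_ne_top _ _)

theorem integral_measureReal_update_preimage (i : I) {C : Set (∀ j, Ω j)}
    (hC : MeasurableSet C) :
    ∫ x, (Measure.pi μ).real ((update · i x) ⁻¹' C) ∂μ i = (Measure.pi μ).real C := by
  simp only [measureReal_def]
  rw [integral_toReal (measurable_measure_update_preimage μ i hC).aemeasurable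
    (ae_of_all _ fun _ => measure_lt_top _ _), lintegral_measure_update_preimage μ i hC]

noncomputable def influence (G : (∀ j, Ω j) → ℝ) (i : I) : ℝ :=
  ((Measure.pi μ).prod (μ i)).real {q | G q.1 ≠ G (update q.1 i q.2)}

variable {F G : (∀ j, Ω j) → ℝ} (hF : Measurable F) (hG : Measurable G)
  (hF01 : ∀ ω, F ω ∈ Set.Icc (0 : ℝ) 1) (hG01 : ∀ ω, G ω ∈ Set.Icc (0 : ℝ) 1)
include hF hG hF01 hG01

theorem integrable_sub_update_mul_sub_const (i : I) (m : ℝ) :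
    Integrable (fun q : (∀ j, Ω j) × Ω i => (F q.1 - F (update q.1 i q.2)) * (G q.1 - m))
      ((Measure.pi μ).prod (μ i)) :=
  integrable_mul_sub_const ((hF.comp measurable_fst).sub (hF.comp measurable_update'))
    (fun _ => norm_sub_le_one_of_mem_Icc (hF01 _) (hF01 _)) (hG.comp measurable_fst)
    (fun q => hG01 q.1) m

theorem integral_sub_update_mul_le_influence (i : I) (m : ℝ) :
    ∫ q, (F q.1 - F (update q.1 i q.2)) * (G q.1 - m) ∂((Measure.pi μ).prod (μ i)) ≤
      influence μ G i := by
  set ν := (Measure.pi μ).prod (μ i)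
  set H : (∀ j, Ω j) × Ω i → ℝ := fun q => (F q.1 - F (update q.1 i q.2)) * (G q.1 - m)
  set D := {q : (∀ j, Ω j) × Ω i | G q.1 ≠ G (update q.1 i q.2)}
  set Φ : ((∀ j, Ω j) × Ω i) × Ω i → (∀ j, Ω j) × Ω i := Prod.map (fun q => update q.1 i q.2) id
  set σ : ((∀ j, Ω j) × Ω i) × Ω i → ((∀ j, Ω j) × Ω i) × Ω i :=
    fun p => ((p.1.1, p.2), p.1.2)
  have hΦ : MeasurePreserving Φ (ν.prod (μ i)) ν :=
    (measurePreserving_update_pi μ i).prod (.id _)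
  have hσ : MeasurePreserving σ (ν.prod (μ i)) (ν.prod (μ i)) :=
    ((measurePreserving_prodAssoc _ _ _).symm MeasurableEquiv.prodAssoc).comp
      (((MeasurePreserving.id _).prod Measure.measurePreserving_swap).comp
        (measurePreserving_prodAssoc _ _ _))
  have hHm : Measurable H :=
    ((hF.comp measurable_fst).sub (hF.comp measurable_update')).mul
      ((hG.comp measurable_fst).sub measurable_const)
  have hD : MeasurableSet D :=
    (measurableSet_eq_fun (hG.comp measurable_fst) (hG.comp measurable_update')).compl
  have hHΦ : Integrable (H ∘ Φ) (ν.prod (μ i)) := (hΦ.integrable_comp hHm.aestronglyMeasurable).2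
    (integrable_sub_update_mul_sub_const μ hF hG hF01 hG01 i m)
  have hHΦσ : Integrable (H ∘ Φ ∘ σ) (ν.prod (μ i)) :=
    (hσ.integrable_comp hHΦ.aestronglyMeasurable).2 hHΦ
  have hsym : ∀ p, H (Φ p) + H (Φ (σ p)) ≤ D.indicator 1 (Φ p) := by
    rintro ⟨⟨ω, u⟩, x⟩
    simp only [H, Φ, σ, D, Prod.map, id, update_idem, Set.indicator_apply, Set.mem_ofPred_eq,
      Pi.one_apply]
    split_ifs with h
    · linarith [sub_mul_sub_le_one_of_mem_Icc (hF01 (update ω i u)) (hF01 (update ω i x))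
        (hG01 (update ω i u)) (hG01 (update ω i x))]
    · rw [not_not.1 h]
      linarith
  have h2 : 2 * ∫ q, H q ∂ν ≤ influence μ G i := calc
    2 * ∫ q, H q ∂ν = ∫ p, H (Φ p) ∂(ν.prod (μ i)) + ∫ p, H (Φ (σ p)) ∂(ν.prod (μ i)) := by
      rw [hσ.integral_comp_of_aestronglyMeasurable (g := fun p => H (Φ p))
          hHΦ.aestronglyMeasurable,
        hΦ.integral_comp_of_aestronglyMeasurable hHm.aestronglyMeasurable]
      ring
    _ = ∫ p, H (Φ p) + H (Φ (σ p)) ∂(ν.prod (μ i)) := (integral_add hHΦ hHΦσ).symm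
    _ ≤ ∫ p, D.indicator 1 (Φ p) ∂(ν.prod (μ i)) :=
      integral_mono (hHΦ.add hHΦσ) ((hΦ.integrable_comp
        (measurable_const.indicator hD).aestronglyMeasurable).2
          ((integrable_const 1).indicator hD)) hsym
    _ = influence μ G i := by
      rw [hΦ.integral_comp_of_aestronglyMeasurable (g := D.indicator 1)
        (measurable_const.indicator hD).aestronglyMeasurable, integral_indicator_one hD]
      rfl
  have h0 : 0 ≤ influence μ G i := measureReal_nonneg
  linarith

theorem covariance_le_influence_add_integral (i : I) {B : Ω i → ℝ} (hB : Integrable B (μ i))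
    (hFB : ∀ x, cov[fun ω => F (update ω i x), G; Measure.pi μ] ≤ B x) :
    cov[F, G; Measure.pi μ] ≤ influence μ G i + ∫ x, B x ∂μ i := by
  set m := ∫ ω, G ω ∂(Measure.pi μ)
  have hFU : Integrable (fun q : (∀ j, Ω j) × Ω i => F (update q.1 i q.2) * (G q.1 - m))
      ((Measure.pi μ).prod (μ i)) :=
    integrable_mul_sub_const (hF.comp measurable_update') (fun _ => norm_le_one_of_mem_Icc (hF01 _))
      (hG.comp measurable_fst) (fun q => hG01 q.1) m
  have hcov : ∀ x, cov[fun ω => F (update ω i x), G; Measure.pi μ] =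
      ∫ ω, F (update ω i x) * (G ω - m) ∂(Measure.pi μ) := fun x =>
    covariance_eq_integral_mul_sub (memLp_of_mem_Icc (hF.comp measurable_update_left)
      (fun _ => hF01 _) 2) (memLp_of_mem_Icc hG hG01 2)
  calc cov[F, G; Measure.pi μ]
      = ∫ q, F q.1 * (G q.1 - m) ∂((Measure.pi μ).prod (μ i)) := by
        rw [covariance_eq_integral_mul_sub (memLp_of_mem_Icc hF hF01 2)
          (memLp_of_mem_Icc hG hG01 2), integral_fun_fst (fun ω => F ω * (G ω - m)),
          probReal_univ, one_smul]
    _ = ∫ q, (F q.1 - F (update q.1 i q.2)) * (G q.1 - m) ∂((Measure.pi μ).prod (μ i)) +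
          ∫ x, ∫ ω, F (update ω i x) * (G ω - m) ∂(Measure.pi μ) ∂μ i := by
        rw [← integral_prod_symm _ hFU,
          ← integral_add (integrable_sub_update_mul_sub_const μ hF hG hF01 hG01 i m) hFU]
        simp_rw [sub_mul, sub_add_cancel]
    _ ≤ influence μ G i + ∫ x, B x ∂μ i := by
        gcongr ?_ + ?_
        · exact integral_sub_update_mul_le_influence μ hF hG hF01 hG01 i m
        · refine integral_mono hFU.integral_prod_right hB fun x => ?_
          rw [← hcov x]
          exact hFB x

end Resampling

namespace DTree

variable {I : Type*} [Fintype I] [DecidableEq I] {Ω : I → Type*} [∀ i, MeasurableSpace (Ω i)]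
  (μ : ∀ i, Measure (Ω i)) [∀ i, IsProbabilityMeasure (μ i)]

noncomputable def revealment {α : Type*} (S : DTree I Ω α) (j : I) : ℝ :=
  (Measure.pi μ).real {ω | j ∈ S.revealed ω}

theorem revealment_add_ite_le {α : Type*} {i : I} {c : Ω i → DTree I Ω α} {x : Ω i}
    (hc : (c x).Avoids i) (j : I) :
    (c x).revealment μ j + (if j = i then 1 else 0) ≤ (Measure.pi μ).real
      ((update · i x) ⁻¹' toMeasurable (Measure.pi μ) {ω | j ∈ (node i c).revealed ω}) := by
  split_ifs with hji
  · subst hji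
    have huniv : (update · j x) ⁻¹' toMeasurable (Measure.pi μ)
        {ω | j ∈ (node j c).revealed ω} = Set.univ :=
      Set.eq_univ_of_forall fun ω => subset_toMeasurable _ _ (by simp [revealed])
    simp [revealment, notMem_revealed_of_avoids hc, huniv]
  · rw [add_zero]
    refine measureReal_mono fun ω hω => subset_toMeasurable _ _ ?_
    simpa [revealed, revealed_update_of_avoids hc] using Or.inr hω

theorem covariance_eval_le {G : (∀ j, Ω j) → ℝ} (hG : Measurable G)
    (hG01 : ∀ ω, G ω ∈ Set.Icc (0 : ℝ) 1) :
    ∀ S : DTree I Ω ℝ, S.Nodup → Measurable S.eval → (∀ ω, S.eval ω ∈ Set.Icc (0 : ℝ) 1) →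
      cov[S.eval, G; Measure.pi μ] ≤ ∑ j, S.revealment μ j * influence μ G j
  | .leaf a, _, _, _ => by
    rw [show (leaf a : DTree I Ω ℝ).eval = fun _ => a from rfl, covariance_const_left]
    exact Finset.sum_nonneg fun j _ => mul_nonneg measureReal_nonneg measureReal_nonneg
  | .node i c, hS, hm, h01 => by
    have hcx : ∀ x, (c x).eval = fun ω => (node i c).eval (update ω i x) := fun x =>
      funext fun ω => by simp [eval, eval_update_of_avoids (hS x).1]
    -- The branches of a tree are arbitrary functions, so the revealment sets need not be
    -- measurable: the subtree bounds are integrated over `x` through their measurable hulls.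
    set C := fun j => toMeasurable (Measure.pi μ) {ω | j ∈ (node i c).revealed ω}
    set R := fun x : Ω i => ∑ j, (Measure.pi μ).real ((update · i x) ⁻¹' C j) * influence μ G j
    have hR : Integrable R (μ i) :=
      integrable_finsetSum _ fun j _ => (integrable_measureReal_update_preimage μ i
        (measurableSet_toMeasurable _ _)).mul_const _
    refine (covariance_le_influence_add_integral μ hm hG h01 hG01 i
      (B := fun x => R x - influence μ G i) (hR.sub (integrable_const _)) fun x => ?_).trans ?_
    · rw [← hcx x]
      calc cov[(c x).eval, G; Measure.pi μ]
          ≤ ∑ j, (c x).revealment μ j * influence μ G j :=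
            covariance_eval_le hG hG01 (c x) (hS x).2
              (hcx x ▸ hm.comp measurable_update_left) (fun ω => hcx x ▸ h01 _)
        _ = ∑ j, ((c x).revealment μ j + (if j = i then 1 else 0)) * influence μ G j -
              influence μ G i := by
            simp [add_mul, Finset.sum_add_distrib]
        _ ≤ R x - influence μ G i := by
            simp only [R]
            gcongr with j
            · exact measureReal_nonneg
            · exact revealment_add_ite_le μ (hS x).1 j
    · rw [integral_sub hR (integrable_const _), integral_finsetSum _ fun j _ =>
        (integrable_measureReal_update_preimage μ i (measurableSet_toMeasurable _ _)).mul_const _]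
      simp only [integral_mul_const, integral_const, probReal_univ, one_smul,
        integral_measureReal_update_preimage μ i (measurableSet_toMeasurable _ _)]
      simp only [measureReal_def, measure_toMeasurable, add_sub_cancel, revealment, le_refl]

end DTree

/-- The OSSS inequality: if a decision tree `T` computes `f : Π i, Ω i → [0,1]`,
then `Var(f) ≤ Σ_i δ_i(T)·Inf_i(f)`, where `δ_i(T)` is the revealment of the
coordinate `i` and `Inf_i(f)` the probability that independently resampling the
coordinate `i` changes the value of `f`. -/
theorem osss {I : Type*} [Fintype I] [DecidableEq I] {Ω : I → Type*}
    [∀ i, MeasurableSpace (Ω i)] (μ : ∀ i, Measure (Ω i))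
    [∀ i, IsProbabilityMeasure (μ i)]
    (f : (∀ i, Ω i) → ℝ) (hf : Measurable f)
    (hf01 : ∀ ω, f ω ∈ Set.Icc (0 : ℝ) 1)
    (T : DTree I Ω ℝ) (hT : ∀ ω, T.eval ω = f ω) :
    (∫ ω, (f ω - ∫ ω', f ω' ∂(Measure.pi μ)) ^ 2 ∂(Measure.pi μ)) ≤
      ∑ i : I, ((Measure.pi μ) {ω | i ∈ T.revealed ω} *
        ((Measure.pi μ).prod (μ i))
          {q | f q.1 ≠ f (Function.update q.1 i q.2)}).toReal := by
  have hempty : ∀ ω : ∀ i, Ω i, DTree.ExtendsPartial ω fun _ => none :=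
    fun _ _ _ h => nomatch h
  set T' := T.prune fun _ => none
  have hT' : T'.eval = f := funext fun ω => (T.eval_prune (hempty ω)).trans (hT ω)
  calc (∫ ω, (f ω - ∫ ω', f ω' ∂(Measure.pi μ)) ^ 2 ∂(Measure.pi μ))
      = cov[T'.eval, f; Measure.pi μ] := by
        rw [hT', covariance_self hf.aemeasurable, variance_eq_integral hf.aemeasurable]
    _ ≤ ∑ i, T'.revealment μ i * influence μ f i :=
        T'.covariance_eval_le μ hf hf01 (T.nodup_prune _) (hT' ▸ hf) (hT' ▸ hf01)
    _ ≤ _ := Finset.sum_le_sum fun i _ => by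
        rw [ENNReal.toReal_mul]
        exact mul_le_mul_of_nonneg_right
          (measureReal_mono fun ω h => T.revealed_prune_subset (hempty ω) h) measureReal_nonneg
end

section
/- Let (f_n)_{n≥1} be a sequence of increasing differentiable functions f_n : [0,b] → [0,1] with f_0 ≡ 1, converging pointwise to f, and suppose for some c > 0 that f_n' ≥ c·(n/Σ_n)·f_n where Σ_n = Σ_{k=0}^{n−1} f_k. Then there exists p_c ∈ [0,b] such that: (1) for every p < p_c there exists c_p > 0 with f_n(p) = O(exp(−c_p n)); and (2) for every p > p_c, f(p) ≥ c(p − p_c). -/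
/-!
Write `Σ_n = Σ_{k<n} f_k` and let `p_c` be the infimum of the points `q` at which `Σ_n(q)` grows
almost linearly: `n ^ α ≤ Σ_n(q)` for infinitely many `n`, for every `α < 1`.

Below `p_c` there is a `q` with `Σ_n(q) < n ^ α` eventually, so `f_n' ≥ c n ^ (1 - α) f_n` left
of `q`; this makes `f_n(r)` stretched-exponentially small at some `r < q`, hence `Σ_n(r) ≤ M`
for all `n`, and then `f_n' ≥ (c n / M) f_n` left of `r` gives exponential decay.

Above `p_c`, `log Σ_{j+1} - log Σ_j ≤ f_j / Σ_j ≤ f_j' / (c j)`; integrating over `[q, p]`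
gives `c (p - q) log Σ_{m+1}(q) ≤ Σ_{j ≤ m} f_j(p) / j`, whose right side is
`(F p + o(1)) log m`. Along the `n` with `Σ_n(q) ≥ n ^ α` this forces `α c (p - q) ≤ F p`.
-/

open Filter Set Real Topology

lemma monotoneOn_Icc_of_hasDerivWithinAt_nonneg {g g' : ℝ → ℝ} {a b : ℝ}
    (hg : ∀ x ∈ Icc a b, HasDerivWithinAt g (g' x) (Icc a b) x)
    (hg' : ∀ x ∈ Icc a b, 0 ≤ g' x) : MonotoneOn g (Icc a b) :=
  monotoneOn_of_hasDerivWithinAt_nonneg (convex_Icc a b)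
    (fun x hx => (hg x hx).continuousWithinAt)
    (fun x hx => (hg x (interior_subset hx)).mono interior_subset)
    (fun x hx => hg' x (interior_subset hx))

lemma image_add_mul_sub_le_of_le_deriv {u u' : ℝ → ℝ} {a b L : ℝ} (hab : a ≤ b)
    (hu : ∀ x ∈ Icc a b, HasDerivWithinAt u (u' x) (Icc a b) x)
    (hL : ∀ x ∈ Icc a b, L ≤ u' x) : u a + L * (b - a) ≤ u b := by
  have hmono : MonotoneOn (fun x => u x - L * x) (Icc a b) :=
    monotoneOn_Icc_of_hasDerivWithinAt_nonneg
      (fun x hx => (hu x hx).sub ((hasDerivWithinAt_id x _).const_mul L))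
      (fun x hx => by simpa using hL x hx)
  have := hmono (left_mem_Icc.2 hab) (right_mem_Icc.2 hab) hab
  linarith

lemma image_le_mul_exp_of_mul_le_deriv {u u' : ℝ → ℝ} {a b T : ℝ} (hab : a ≤ b)
    (hu : ∀ x ∈ Icc a b, HasDerivWithinAt u (u' x) (Icc a b) x)
    (hT : ∀ x ∈ Icc a b, T * u x ≤ u' x) : u a ≤ u b * exp (-T * (b - a)) := by
  have hexp (x : ℝ) : HasDerivAt (fun y => exp (-T * y)) (exp (-T * x) * -T) x := by
    simpa using ((hasDerivAt_id x).const_mul (-T)).exp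
  have hmono : MonotoneOn (fun x => u x * exp (-T * x)) (Icc a b) :=
    monotoneOn_Icc_of_hasDerivWithinAt_nonneg
      (fun x hx => (hu x hx).mul (hexp x).hasDerivWithinAt)
      (fun x hx => by nlinarith [hT x hx, exp_pos (-T * x)])
  calc u a = u a * exp (-T * a) * exp (T * a) := by rw [mul_assoc, ← exp_add]; simp
    _ ≤ u b * exp (-T * b) * exp (T * a) :=
        mul_le_mul_of_nonneg_right (hmono (left_mem_Icc.2 hab) (right_mem_Icc.2 hab) hab)
          (exp_pos _).le
    _ = u b * exp (-T * (b - a)) := by rw [mul_assoc, ← exp_add]; ring_nf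

lemma summable_exp_neg_mul_rpow {a s : ℝ} (ha : 0 < a) (hs : 0 < s) :
    Summable fun n : ℕ => exp (-a * (n : ℝ) ^ s) := by
  have hpow : Tendsto (fun n : ℕ => (n : ℝ) ^ s) atTop atTop :=
    (tendsto_rpow_atTop hs).comp tendsto_natCast_atTop_atTop
  have hlittle := (isLittleO_exp_neg_mul_rpow_atTop ha (-2 / s)).comp_tendsto hpow
  refine summable_of_isBigO_nat (Real.summable_nat_rpow.2 (by norm_num : (-2 : ℝ) < -1))
    (hlittle.isBigO.congr_right fun n => ?_)
  simp only [Function.comp_apply]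
  rw [← rpow_mul n.cast_nonneg, mul_div_cancel₀ _ hs.ne']

lemma log_sum_range_succ_le {x : ℕ → ℝ} (h0 : 0 < x 0) (hx : ∀ k, 0 ≤ x k) (m : ℕ) :
    log (∑ k ∈ Finset.range (m + 1), x k) ≤
      log (x 0) + ∑ j ∈ Finset.range m, x (j + 1) / ∑ k ∈ Finset.range (j + 1), x k := by
  induction m with
  | zero => simp
  | succ m ih =>
    have hS : 0 < ∑ k ∈ Finset.range (m + 1), x k :=
      h0.trans_le (Finset.single_le_sum (fun k _ => hx k) (by simp))
    have hstep : log (∑ k ∈ Finset.range (m + 1), x k + x (m + 1)) ≤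
        log (∑ k ∈ Finset.range (m + 1), x k) +
          x (m + 1) / ∑ k ∈ Finset.range (m + 1), x k := by
      rw [← sub_le_iff_le_add', ← log_div (by linarith [hx (m + 1)]) hS.ne']
      refine (log_le_sub_one_of_pos (div_pos (by linarith [hx (m + 1)]) hS)).trans_eq ?_
      field_simp
      ring
    rw [Finset.sum_range_succ x (m + 1),
      Finset.sum_range_succ (fun j => x (j + 1) / ∑ k ∈ Finset.range (j + 1), x k) m]
    linarith

lemma exists_sum_div_succ_le_add_mul_log {a : ℕ → ℝ} {L γ : ℝ}
    (ha : Tendsto a atTop (𝓝 L)) (hLγ : L < γ) (hγ : 0 ≤ γ) :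
    ∃ C, ∀ m : ℕ, ∑ j ∈ Finset.range m, a (j + 1) / (j + 1) ≤ C + γ * log m := by
  set excess : ℕ → ℝ := fun j => max (a (j + 1) - γ) 0 / (j + 1)
  obtain ⟨N, hN⟩ := eventually_atTop.1 (ha.eventually (gt_mem_nhds hLγ))
  have hexcess : Summable excess :=
    summable_of_ne_finset_zero (s := Finset.range N) fun j hj => by
      have : a (j + 1) < γ := hN _ (by simp at hj; omega)
      simp [excess, this.le]
  refine ⟨∑' j, excess j + γ, fun m => ?_⟩
  have hharmonic : ∑ j ∈ Finset.range m, (1 : ℝ) / (j + 1) ≤ 1 + log m := by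
    simpa [harmonic, one_div] using harmonic_le_one_add_log m
  calc ∑ j ∈ Finset.range m, a (j + 1) / (j + 1)
      ≤ ∑ j ∈ Finset.range m, (excess j + γ * (1 / (j + 1))) := by
        gcongr with j
        rw [mul_one_div, ← add_div]
        gcongr
        linarith [le_max_left (a (j + 1) - γ) 0]
    _ = ∑ j ∈ Finset.range m, excess j +
          γ * ∑ j ∈ Finset.range m, (1 : ℝ) / (j + 1) := by
        rw [Finset.sum_add_distrib, Finset.mul_sum]
    _ ≤ ∑' j, excess j + γ * (1 + log m) := by
        gcongr
        exact hexcess.sum_le_tsum _ fun j _ => by positivity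
    _ = ∑' j, excess j + γ + γ * log m := by ring

lemma le_of_frequently_mul_log_le {α β γ : ℝ}
    (h : ∃ᶠ n : ℕ in atTop, α * log n ≤ β + γ * log n) : α ≤ γ := by
  by_contra! hγα
  have hlog : Tendsto (fun n : ℕ => (α - γ) * log n) atTop atTop :=
    (tendsto_log_atTop.comp tendsto_natCast_atTop_atTop).const_mul_atTop (sub_pos.2 hγα)
  refine h ((hlog.eventually_gt_atTop β).mono fun n hn => ?_)
  linarith

/-- Equivalent to `limsup log (s n) / log n ≥ 1`, the condition defining `p_c` in the paper. -/
def HasNearLinearGrowth (s : ℕ → ℝ) : Prop :=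
  ∀ α : ℝ, α < 1 → ∃ᶠ n : ℕ in atTop, (n : ℝ) ^ α ≤ s n

lemma HasNearLinearGrowth.mono {s t : ℕ → ℝ} (hs : HasNearLinearGrowth s)
    (hst : ∀ n, s n ≤ t n) : HasNearLinearGrowth t :=
  fun α hα => (hs α hα).mono fun n hn => hn.trans (hst n)

/-- Adding `b` to the set makes the infimum equal to `b`, not `sInf ∅ = 0`, when no point of
`[0, b]` satisfies `P`. -/
noncomputable def criticalPoint (b : ℝ) (P : ℝ → Prop) : ℝ :=
  sInf (insert b {x ∈ Icc 0 b | P x})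

section criticalPoint

variable {b : ℝ} {P : ℝ → Prop}

lemma zero_mem_lowerBounds_insert_setOf_mem_Icc (hb : 0 ≤ b) :
    0 ∈ lowerBounds (insert b {x ∈ Icc 0 b | P x}) := by
  rintro x (rfl | ⟨hx, -⟩) <;> [exact hb; exact hx.1]

lemma criticalPoint_mem_Icc (hb : 0 ≤ b) : criticalPoint b P ∈ Icc 0 b :=
  ⟨le_csInf (insert_nonempty _ _) (zero_mem_lowerBounds_insert_setOf_mem_Icc hb),
    csInf_le ⟨0, zero_mem_lowerBounds_insert_setOf_mem_Icc hb⟩ (mem_insert _ _)⟩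

lemma not_of_lt_criticalPoint {x : ℝ} (hx : x ∈ Icc 0 b) (hlt : x < criticalPoint b P) :
    ¬P x := fun hPx => hlt.not_ge <|
  csInf_le ⟨0, zero_mem_lowerBounds_insert_setOf_mem_Icc (hx.1.trans hx.2)⟩
    (mem_insert_of_mem _ ⟨hx, hPx⟩)

lemma of_criticalPoint_lt (hP : ∀ x ∈ Icc 0 b, ∀ y ∈ Icc 0 b, x ≤ y → P x → P y)
    {y : ℝ} (hy : y ≤ b) (hlt : criticalPoint b P < y) : P y := by
  obtain ⟨x, hxA, hxy⟩ := exists_lt_of_csInf_lt (insert_nonempty _ _) hlt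
  rcases hxA with rfl | ⟨hx, hPx⟩
  · exact absurd hy hxy.not_ge
  · exact hP x hx y ⟨hx.1.trans hxy.le, hy⟩ hxy.le hPx

end criticalPoint

section DiffIneq

variable {b c : ℝ} {f f' : ℕ → ℝ → ℝ}

lemma one_le_sum_range (h01 : ∀ n, ∀ p ∈ Icc 0 b, f n p ∈ Icc (0 : ℝ) 1)
    (hf0 : ∀ p ∈ Icc 0 b, f 0 p = 1) {p : ℝ} (hp : p ∈ Icc 0 b) {n : ℕ} (hn : 1 ≤ n) :
    1 ≤ ∑ k ∈ Finset.range n, f k p :=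
  (hf0 p hp).symm.le.trans <|
    Finset.single_le_sum (fun k _ => (h01 k p hp).1) (Finset.mem_range.2 hn)

lemma monotoneOn_sum_range (hmono : ∀ n, MonotoneOn (f n) (Icc 0 b)) (n : ℕ) :
    MonotoneOn (fun p => ∑ k ∈ Finset.range n, f k p) (Icc 0 b) :=
  fun _ hx _ hy hxy => Finset.sum_le_sum fun k _ => hmono k hx hy hxy

lemma apply_le_exp_of_sum_range_le (hc : 0 ≤ c) (hmono : ∀ n, MonotoneOn (f n) (Icc 0 b))
    (hderiv : ∀ n, ∀ p ∈ Icc 0 b, HasDerivWithinAt (f n) (f' n p) (Icc 0 b) p)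
    (h01 : ∀ n, ∀ p ∈ Icc 0 b, f n p ∈ Icc (0 : ℝ) 1) (hf0 : ∀ p ∈ Icc 0 b, f 0 p = 1)
    (hineq : ∀ n : ℕ, 1 ≤ n → ∀ p ∈ Icc 0 b,
      c * ((n : ℝ) / ∑ k ∈ Finset.range n, f k p) * f n p ≤ f' n p)
    {x y K : ℝ} (hx : 0 ≤ x) (hxy : x ≤ y) (hy : y ≤ b) {n : ℕ} (hn : 1 ≤ n)
    (hK : ∑ k ∈ Finset.range n, f k y ≤ K) :
    f n x ≤ exp (-(c * n / K) * (y - x)) := by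
  have hsub : Icc x y ⊆ Icc 0 b := Icc_subset_Icc hx hy
  have hbound : ∀ z ∈ Icc x y, c * n / K * f n z ≤ f' n z := by
    intro z hz
    have hone := one_le_sum_range h01 hf0 (hsub hz) hn
    have hsumK : ∑ k ∈ Finset.range n, f k z ≤ K :=
      (monotoneOn_sum_range hmono n (hsub hz) ⟨hx.trans hxy, hy⟩ hz.2).trans hK
    refine le_trans ?_ (hineq n hn z (hsub hz))
    rw [mul_div_assoc]
    gcongr
    exact (h01 n z (hsub hz)).1
  calc f n x ≤ f n y * exp (-(c * n / K) * (y - x)) :=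
        image_le_mul_exp_of_mul_le_deriv hxy (fun z hz => (hderiv n z (hsub hz)).mono hsub)
          hbound
    _ ≤ exp (-(c * n / K) * (y - x)) :=
        mul_le_of_le_one_left (exp_pos _).le (h01 n y ⟨hx.trans hxy, hy⟩).2

lemma summable_of_eventually_sum_range_lt_rpow (hc : 0 < c)
    (hmono : ∀ n, MonotoneOn (f n) (Icc 0 b))
    (hderiv : ∀ n, ∀ p ∈ Icc 0 b, HasDerivWithinAt (f n) (f' n p) (Icc 0 b) p)
    (h01 : ∀ n, ∀ p ∈ Icc 0 b, f n p ∈ Icc (0 : ℝ) 1) (hf0 : ∀ p ∈ Icc 0 b, f 0 p = 1)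
    (hineq : ∀ n : ℕ, 1 ≤ n → ∀ p ∈ Icc 0 b,
      c * ((n : ℝ) / ∑ k ∈ Finset.range n, f k p) * f n p ≤ f' n p)
    {x y α : ℝ} (hx : 0 ≤ x) (hxy : x < y) (hy : y ≤ b) (hα : α < 1)
    (hsmall : ∀ᶠ n : ℕ in atTop, ∑ k ∈ Finset.range n, f k y < (n : ℝ) ^ α) :
    Summable fun n => f n x := by
  refine (summable_exp_neg_mul_rpow (mul_pos hc (sub_pos.2 hxy)) (sub_pos.2 hα))
    |>.of_norm_bounded_eventually_nat ?_
  filter_upwards [hsmall, eventually_ge_atTop 1] with n hn hn1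
  have hnpos : (0 : ℝ) < n := by exact_mod_cast hn1
  have hpow : -(c * n / (n : ℝ) ^ α) * (y - x) = -(c * (y - x)) * (n : ℝ) ^ (1 - α) := by
    rw [rpow_sub hnpos, rpow_one]
    ring
  rw [norm_of_nonneg (h01 n x ⟨hx, hxy.le.trans hy⟩).1, ← hpow]
  exact apply_le_exp_of_sum_range_le hc.le hmono hderiv h01 hf0 hineq hx hxy.le hy hn1 hn.le

lemma exists_exp_decay_of_not_hasNearLinearGrowth (hc : 0 < c)
    (hmono : ∀ n, MonotoneOn (f n) (Icc 0 b))
    (hderiv : ∀ n, ∀ p ∈ Icc 0 b, HasDerivWithinAt (f n) (f' n p) (Icc 0 b) p)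
    (h01 : ∀ n, ∀ p ∈ Icc 0 b, f n p ∈ Icc (0 : ℝ) 1) (hf0 : ∀ p ∈ Icc 0 b, f 0 p = 1)
    (hineq : ∀ n : ℕ, 1 ≤ n → ∀ p ∈ Icc 0 b,
      c * ((n : ℝ) / ∑ k ∈ Finset.range n, f k p) * f n p ≤ f' n p)
    {p q : ℝ} (hp : 0 ≤ p) (hpq : p < q) (hq : q ≤ b)
    (hslow : ¬HasNearLinearGrowth fun n => ∑ k ∈ Finset.range n, f k q) :
    ∃ cp > 0, ∃ C > 0, ∀ n : ℕ, f n p ≤ C * exp (-cp * n) := by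
  obtain ⟨r, hpr, hrq⟩ := exists_between hpq
  have hr : r ∈ Icc 0 b := ⟨hp.trans hpr.le, hrq.le.trans hq⟩
  simp only [HasNearLinearGrowth, not_forall, not_frequently, not_le] at hslow
  obtain ⟨α, hα, hsmall⟩ := hslow
  have hsum := summable_of_eventually_sum_range_lt_rpow hc hmono hderiv h01 hf0 hineq
    hr.1 hrq hq hα hsmall
  set M := ∑' n, f n r
  have hsumM (n : ℕ) : ∑ k ∈ Finset.range n, f k r ≤ M :=
    hsum.sum_le_tsum _ fun k _ => (h01 k r hr).1
  have hM : 0 < M := one_pos.trans_le ((one_le_sum_range h01 hf0 hr le_rfl).trans (hsumM 1))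
  refine ⟨c * (r - p) / M, by have := sub_pos.2 hpr; positivity, 1, one_pos, fun n => ?_⟩
  rcases Nat.eq_zero_or_pos n with rfl | hn
  · simp [hf0 p ⟨hp, hpq.le.trans hq⟩]
  · rw [one_mul]
    refine (apply_le_exp_of_sum_range_le hc.le hmono hderiv h01 hf0 hineq hp hpr.le hr.2 hn
      (hsumM n)).trans_eq ?_
    ring_nf

/-- Integrate `c log Σ_{m+1} ≤ Σ_{j<m} f_{j+1}' / (j + 1)` over `[q, p]`; pointwise it follows
from `log Σ_{j+2} - log Σ_{j+1} ≤ f_{j+1} / Σ_{j+1}` and the differential inequality. -/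
lemma mul_log_sum_range_le_sum_div (hc : 0 ≤ c) (hmono : ∀ n, MonotoneOn (f n) (Icc 0 b))
    (hderiv : ∀ n, ∀ p ∈ Icc 0 b, HasDerivWithinAt (f n) (f' n p) (Icc 0 b) p)
    (h01 : ∀ n, ∀ p ∈ Icc 0 b, f n p ∈ Icc (0 : ℝ) 1) (hf0 : ∀ p ∈ Icc 0 b, f 0 p = 1)
    (hineq : ∀ n : ℕ, 1 ≤ n → ∀ p ∈ Icc 0 b,
      c * ((n : ℝ) / ∑ k ∈ Finset.range n, f k p) * f n p ≤ f' n p)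
    {p q : ℝ} (hq : 0 ≤ q) (hqp : q ≤ p) (hp : p ≤ b) (m : ℕ) :
    c * (p - q) * log (∑ k ∈ Finset.range (m + 1), f k q) ≤
      ∑ j ∈ Finset.range m, f (j + 1) p / (j + 1) := by
  have hsub : Icc q p ⊆ Icc 0 b := Icc_subset_Icc hq hp
  have hq' : q ∈ Icc 0 b := hsub (left_mem_Icc.2 hqp)
  have hderiv_bound : ∀ x ∈ Icc 0 b, c * log (∑ k ∈ Finset.range (m + 1), f k x) ≤
      ∑ j ∈ Finset.range m, f' (j + 1) x / (j + 1) := by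
    intro x hx
    have hlog := log_sum_range_succ_le (x := fun k => f k x) (by simp [hf0 x hx])
      (fun k => (h01 k x hx).1) m
    rw [hf0 x hx, log_one, zero_add] at hlog
    refine (mul_le_mul_of_nonneg_left hlog hc).trans ?_
    rw [Finset.mul_sum]
    gcongr with j
    have hone := one_le_sum_range h01 hf0 hx (Nat.le_add_left 1 j)
    have := hineq (j + 1) (Nat.le_add_left 1 j) x hx
    push_cast at this
    rw [le_div_iff₀ (by positivity)]
    calc c * (f (j + 1) x / ∑ k ∈ Finset.range (j + 1), f k x) * (j + 1)
        = c * ((j + 1) / ∑ k ∈ Finset.range (j + 1), f k x) * f (j + 1) x := by ring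
      _ ≤ f' (j + 1) x := this
  have hlog_mono : ∀ x ∈ Icc q p, c * log (∑ k ∈ Finset.range (m + 1), f k q) ≤
      c * log (∑ k ∈ Finset.range (m + 1), f k x) := fun x hx =>
    mul_le_mul_of_nonneg_left (log_le_log
      (zero_lt_one.trans_le (one_le_sum_range h01 hf0 hq' (Nat.le_add_left 1 m)))
      (monotoneOn_sum_range hmono _ hq' (hsub hx) hx.1)) hc
  have hgrowth := image_add_mul_sub_le_of_le_deriv hqp
    (u := fun x => ∑ j ∈ Finset.range m, f (j + 1) x / (j + 1))
    (fun x hx => HasDerivWithinAt.fun_sum fun j _ =>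
      ((hderiv (j + 1) x (hsub hx)).mono hsub).div_const _)
    (fun x hx => (hlog_mono x hx).trans (hderiv_bound x (hsub hx)))
  have hnonneg : 0 ≤ ∑ j ∈ Finset.range m, f (j + 1) q / (j + 1) :=
    Finset.sum_nonneg fun j _ => div_nonneg (h01 _ q hq').1 (by positivity)
  linarith

lemma mul_sub_le_of_hasNearLinearGrowth (hc : 0 ≤ c)
    (hmono : ∀ n, MonotoneOn (f n) (Icc 0 b))
    (hderiv : ∀ n, ∀ p ∈ Icc 0 b, HasDerivWithinAt (f n) (f' n p) (Icc 0 b) p)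
    (h01 : ∀ n, ∀ p ∈ Icc 0 b, f n p ∈ Icc (0 : ℝ) 1) (hf0 : ∀ p ∈ Icc 0 b, f 0 p = 1)
    (hineq : ∀ n : ℕ, 1 ≤ n → ∀ p ∈ Icc 0 b,
      c * ((n : ℝ) / ∑ k ∈ Finset.range n, f k p) * f n p ≤ f' n p)
    {p q L : ℝ} (hq : 0 ≤ q) (hqp : q ≤ p) (hp : p ≤ b)
    (hfast : HasNearLinearGrowth fun n => ∑ k ∈ Finset.range n, f k q)
    (hlim : Tendsto (fun n => f n p) atTop (𝓝 L)) :
    c * (p - q) ≤ L := by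
  have hcpq : 0 ≤ c * (p - q) := mul_nonneg hc (sub_nonneg.2 hqp)
  have hL : 0 ≤ L := ge_of_tendsto' hlim fun n => (h01 n p ⟨hq.trans hqp, hp⟩).1
  refine le_of_forall_gt_imp_ge_of_dense fun γ hLγ => ?_
  obtain ⟨C, hC⟩ := exists_sum_div_succ_le_add_mul_log hlim hLγ (hL.trans hLγ.le)
  have hα : ∀ α : ℝ, α < 1 → α * (c * (p - q)) ≤ γ := by
    intro α hα
    refine le_of_frequently_mul_log_le (β := C) <|
      ((hfast α hα).and_eventually (eventually_ge_atTop 1)).mono ?_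
    rintro n ⟨hn, hn1⟩
    obtain ⟨m, rfl⟩ := Nat.exists_eq_add_of_le' hn1
    have hnpos : (0 : ℝ) < (m + 1 : ℕ) := by positivity
    calc α * (c * (p - q)) * log (m + 1 : ℕ)
        = c * (p - q) * log (((m + 1 : ℕ) : ℝ) ^ α) := by rw [log_rpow hnpos]; ring
      _ ≤ c * (p - q) * log (∑ k ∈ Finset.range (m + 1), f k q) :=
          mul_le_mul_of_nonneg_left (log_le_log (rpow_pos_of_pos hnpos α) hn) hcpq
      _ ≤ ∑ j ∈ Finset.range m, f (j + 1) p / (j + 1) :=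
          mul_log_sum_range_le_sum_div hc hmono hderiv h01 hf0 hineq hq hqp hp m
      _ ≤ C + γ * log m := hC m
      _ ≤ C + γ * log (m + 1 : ℕ) := by
          rcases m.eq_zero_or_pos with rfl | hm
          · simp
          · gcongr
            · exact hL.trans hLγ.le
            · simp
  refine le_of_tendsto (x := 𝓝[<] (1 : ℝ)) ?_ (eventually_nhdsWithin_of_forall hα)
  simpa using ((continuous_mul_const (c * (p - q))).tendsto 1).mono_left nhdsWithin_le_nhds

end DiffIneq

/-- If a family of increasing differentiable functions `f_n : [0,b] → [0,1]`
with `f_0 ≡ 1` converges pointwise to `f` and satisfies the differential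
inequality `f_n' ≥ c (n/Σ_n) f_n` with `Σ_n = Σ_{k<n} f_k`, then there is a
critical point `p_c ∈ [0,b]` with exponential decay of `f_n` below `p_c` and
at least linear growth of `f` above `p_c`. -/
theorem sharp_threshold_from_diff_ineq (b c : ℝ) (hb : 0 < b) (hc : 0 < c)
    (f : ℕ → ℝ → ℝ) (f' : ℕ → ℝ → ℝ) (F : ℝ → ℝ)
    (hmono : ∀ n, MonotoneOn (f n) (Set.Icc 0 b))
    (hderiv : ∀ n, ∀ p ∈ Set.Icc 0 b, HasDerivWithinAt (f n) (f' n p) (Set.Icc 0 b) p)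
    (h01 : ∀ n, ∀ p ∈ Set.Icc 0 b, f n p ∈ Set.Icc (0 : ℝ) 1)
    (hf0 : ∀ p ∈ Set.Icc 0 b, f 0 p = 1)
    (hlim : ∀ p ∈ Set.Icc 0 b, Tendsto (fun n => f n p) atTop (nhds (F p)))
    (hineq : ∀ n : ℕ, 1 ≤ n → ∀ p ∈ Set.Icc 0 b,
      c * ((n : ℝ) / ∑ k ∈ Finset.range n, f k p) * f n p ≤ f' n p) :
    ∃ pc ∈ Set.Icc 0 b,
      (∀ p ∈ Set.Icc 0 b, p < pc →
        ∃ cp > 0, ∃ C > 0, ∀ n : ℕ, f n p ≤ C * Real.exp (-cp * n)) ∧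
      (∀ p ∈ Set.Icc 0 b, pc < p → c * (p - pc) ≤ F p) := by
  set P : ℝ → Prop := fun p => HasNearLinearGrowth fun n => ∑ k ∈ Finset.range n, f k p
  have hP : ∀ x ∈ Icc 0 b, ∀ y ∈ Icc 0 b, x ≤ y → P x → P y :=
    fun x hx y hy hxy hPx => hPx.mono fun n => monotoneOn_sum_range hmono n hx hy hxy
  have hpc := criticalPoint_mem_Icc (P := P) hb.le
  refine ⟨criticalPoint b P, hpc, fun p hp hlt => ?_, fun p hp hlt => ?_⟩
  · obtain ⟨q, hpq, hqc⟩ := exists_between hlt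
    exact exists_exp_decay_of_not_hasNearLinearGrowth hc hmono hderiv h01 hf0 hineq hp.1 hpq
      (hqc.le.trans hpc.2)
      (not_of_lt_criticalPoint ⟨hp.1.trans hpq.le, hqc.le.trans hpc.2⟩ hqc)
  · have hlower : ∀ᶠ q in 𝓝[>] criticalPoint b P, c * (p - q) ≤ F p := by
      filter_upwards [Ioo_mem_nhdsGT hlt] with q hq
      exact mul_sub_le_of_hasNearLinearGrowth hc.le hmono hderiv h01 hf0 hineq
        (hpc.1.trans hq.1.le) hq.2.le hp.2 (of_criticalPoint_lt hP (hq.2.le.trans hp.2) hq.1)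
        (hlim p hp)
    exact le_of_tendsto (x := 𝓝[>] criticalPoint b P)
      ((continuous_const.mul (continuous_const.sub continuous_id)).continuousWithinAt) hlower
end
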